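/- arXiv:2410.17098 — 2 statements merged into one kernel-verified Lean document; each statement's English description precedes it below -/
import Mathlib

section
/- If f satisfies (α,ε₁)-RDP and g satisfies (α,ε₂)-RDP (with g's randomness independent of f's), then the composed mechanism h(D) = (f(D), g(D)) satisfies (α, ε₁+ε₂)-RDP. -/
open MeasureTheory

/-- Rényi divergence of order `α`. -/
noncomputable def renyiDiv {Ω : Type*} [MeasurableSpace Ω] (α : ℝ) (P Q : Measure Ω) : ℝ :=
  (α - 1)⁻¹ * Real.log (∫ x, ((P.rnDeriv Q) x).toReal ^ α ∂Q)

/-- The Radon–Nikodym derivative of a product of probability measures is (a.e.) the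
product of the Radon–Nikodym derivatives of the factors. -/
lemma rnDeriv_prod_ae {Ω₁ Ω₂ : Type*} [MeasurableSpace Ω₁] [MeasurableSpace Ω₂]
    (P₁ Q₁ : Measure Ω₁) (P₂ Q₂ : Measure Ω₂)
    [IsProbabilityMeasure P₁] [IsProbabilityMeasure Q₁]
    [IsProbabilityMeasure P₂] [IsProbabilityMeasure Q₂]
    (h1 : P₁ ≪ Q₁) (h2 : P₂ ≪ Q₂) :
    (P₁.prod P₂).rnDeriv (Q₁.prod Q₂) =ᵐ[Q₁.prod Q₂]
      fun z => P₁.rnDeriv Q₁ z.1 * P₂.rnDeriv Q₂ z.2 := by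
  have hm : Measurable fun z : Ω₁ × Ω₂ => P₁.rnDeriv Q₁ z.1 * P₂.rnDeriv Q₂ z.2 :=
    ((Measure.measurable_rnDeriv _ _).comp measurable_fst).mul
      ((Measure.measurable_rnDeriv _ _).comp measurable_snd)
  have hadd : P₁.prod P₂ = 0 + (Q₁.prod Q₂).withDensity
      (fun z => P₁.rnDeriv Q₁ z.1 * P₂.rnDeriv Q₂ z.2) := by
    rw [zero_add]
    refine Measure.prod_eq fun s t hs ht => ?_
    rw [withDensity_apply _ (hs.prod ht), ← Measure.prod_restrict,
      lintegral_prod_mul (Measure.measurable_rnDeriv _ _).aemeasurable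
        (Measure.measurable_rnDeriv _ _).aemeasurable,
      ← withDensity_apply _ hs, ← withDensity_apply _ ht,
      Measure.withDensity_rnDeriv_eq _ _ h1, Measure.withDensity_rnDeriv_eq _ _ h2]
  exact (Measure.eq_rnDeriv hm Measure.MutuallySingular.zero_left hadd).symm

/-- The `log` of the Rényi integral is nonnegative (Jensen's inequality / degenerate case). -/
lemma log_renyi_integral_nonneg {Ω : Type*} [MeasurableSpace Ω] (P Q : Measure Ω)
    [IsProbabilityMeasure P] [IsProbabilityMeasure Q] (hac : P ≪ Q) {α : ℝ} (hα : 1 < α) :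
    0 ≤ Real.log (∫ x, ((P.rnDeriv Q) x).toReal ^ α ∂Q) := by
  by_cases hint : Integrable (fun x => ((P.rnDeriv Q) x).toReal ^ α) Q
  · have h1 : ∫ x, ((P.rnDeriv Q) x).toReal ∂Q = 1 := by
      rw [Measure.integral_toReal_rnDeriv hac]; simp
    have hconv : ConvexOn ℝ (Set.Ici 0) fun x : ℝ => x ^ α := convexOn_rpow hα.le
    have hcont : ContinuousOn (fun x : ℝ => x ^ α) (Set.Ici 0) := fun x _ =>
      (Real.continuousAt_rpow_const x α (Or.inr (by linarith))).continuousWithinAt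
    have hJ := hconv.map_integral_le hcont isClosed_Ici
      (Filter.Eventually.of_forall fun x => ENNReal.toReal_nonneg)
      (Measure.integrable_toReal_rnDeriv) hint
    rw [h1, Real.one_rpow] at hJ
    exact Real.log_nonneg hJ
  · rw [integral_undef hint]; simp

/-- Composition of RDP mechanisms: if `f` is `(α,ε₁)`-RDP and `g` is `(α,ε₂)`-RDP
(with independent randomness), then `h(D) = (f(D), g(D))`, whose output distribution
on a dataset is the product of the component distributions, is `(α,ε₁+ε₂)`-RDP. -/
theorem rdp_composition {Data Ω₁ Ω₂ : Type*} [MeasurableSpace Ω₁] [MeasurableSpace Ω₂]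
    (Adj : Data → Data → Prop) (f : Data → Measure Ω₁) (g : Data → Measure Ω₂)
    (hprobf : ∀ D, IsProbabilityMeasure (f D)) (hprobg : ∀ D, IsProbabilityMeasure (g D))
    (α ε₁ ε₂ : ℝ) (hα : 1 < α)
    (hacf : ∀ D D', Adj D D' → f D ≪ f D') (hacg : ∀ D D', Adj D D' → g D ≪ g D')
    (hf : ∀ D D', Adj D D' → renyiDiv α (f D) (f D') ≤ ε₁)
    (hg : ∀ D D', Adj D D' → renyiDiv α (g D) (g D') ≤ ε₂) :
    ∀ D D', Adj D D' →
      renyiDiv α ((f D).prod (g D)) ((f D').prod (g D')) ≤ ε₁ + ε₂ := by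
  intro D D' hDD'
  haveI := hprobf D; haveI := hprobf D'; haveI := hprobg D; haveI := hprobg D'
  have hacf' := hacf D D' hDD'
  have hacg' := hacg D D' hDD'
  set A := ∫ x, (((f D).rnDeriv (f D')) x).toReal ^ α ∂(f D') with hA_def
  set B := ∫ x, (((g D).rnDeriv (g D')) x).toReal ^ α ∂(g D') with hB_def
  have hinv : 0 ≤ (α - 1)⁻¹ := inv_nonneg.mpr (by linarith)
  have hε₁ : 0 ≤ ε₁ :=
    le_trans (mul_nonneg hinv (log_renyi_integral_nonneg _ _ hacf' hα)) (hf D D' hDD')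
  have hε₂ : 0 ≤ ε₂ :=
    le_trans (mul_nonneg hinv (log_renyi_integral_nonneg _ _ hacg' hα)) (hg D D' hDD')
  have hprod : ∫ z, ((((f D).prod (g D)).rnDeriv ((f D').prod (g D'))) z).toReal ^ α
      ∂((f D').prod (g D')) = A * B := by
    have hcongr : (fun z => ((((f D).prod (g D)).rnDeriv ((f D').prod (g D'))) z).toReal ^ α)
        =ᵐ[(f D').prod (g D')]
        fun z => (((f D).rnDeriv (f D')) z.1).toReal ^ α * (((g D).rnDeriv (g D')) z.2).toReal ^ α := by
      filter_upwards [rnDeriv_prod_ae (f D) (f D') (g D) (g D') hacf' hacg'] with z hz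
      rw [hz, ENNReal.toReal_mul,
        Real.mul_rpow ENNReal.toReal_nonneg ENNReal.toReal_nonneg]
    rw [integral_congr_ae hcongr]
    exact integral_prod_mul (L := ℝ) (fun x => (((f D).rnDeriv (f D')) x).toReal ^ α)
      (fun y => (((g D).rnDeriv (g D')) y).toReal ^ α)
  unfold renyiDiv
  rw [hprod]
  by_cases hA : A = 0
  · rw [hA, zero_mul, Real.log_zero, mul_zero]
    linarith
  by_cases hB : B = 0
  · rw [hB, mul_zero, Real.log_zero, mul_zero]
    linarith
  rw [Real.log_mul hA hB, mul_add]
  exact add_le_add (hf D D' hDD') (hg D D' hDD')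
end

section
/- The Gaussian mechanism M(D) = q(D) + N(0, σ²I), applied to a function q with L2-sensitivity at most C, satisfies (α, αC²/(2σ²))-Rényi differential privacy for every α > 1. -/
open MeasureTheory ProbabilityTheory
open scoped ENNReal NNReal Real


lemma lintegral_pi_prod {n : ℕ} (μ : Fin n → Measure ℝ) [∀ i, SigmaFinite (μ i)]
    {f : Fin n → ℝ → ℝ≥0∞} (hf : ∀ i, Measurable (f i)) :
    ∫⁻ x, ∏ i, f i (x i) ∂Measure.pi μ = ∏ i, ∫⁻ t, f i t ∂μ i := by
  induction n with
  | zero => simp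
  | succ n ih =>
      have h := (measurePreserving_piFinSuccAbove μ 0).symm
      have hg : AEMeasurable (fun b : Fin n → ℝ => ∏ i : Fin n, f i.succ (b i))
          (Measure.pi fun j => μ (Fin.succAbove 0 j)) :=
        (Finset.measurable_prod _ fun i _ =>
          (hf i.succ).comp (measurable_pi_apply i)).aemeasurable
      rw [← h.map_eq, lintegral_map_equiv]
      calc ∫⁻ y, ∏ i, f i (((MeasurableEquiv.piFinSuccAbove (fun _ => ℝ) 0).symm y) i)
            ∂((μ 0).prod (Measure.pi fun j => μ (Fin.succAbove 0 j)))
          = ∫⁻ y : ℝ × (Fin n → ℝ), f 0 y.1 * ∏ i : Fin n, f i.succ (y.2 i)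
            ∂((μ 0).prod (Measure.pi fun j => μ (Fin.succAbove 0 j))) := by
            refine lintegral_congr fun y => ?_
            simp_rw [MeasurableEquiv.piFinSuccAbove_symm_apply, Fin.insertNthEquiv,
              Equiv.coe_fn_mk, Fin.insertNth_zero, Fin.prod_univ_succ, Fin.cons_zero,
              Fin.cons_succ]
            simp
        _ = (∫⁻ t, f 0 t ∂μ 0) * ∏ i : Fin n, ∫⁻ t, f i.succ t ∂μ (Fin.succAbove 0 i) := by
            rw [lintegral_prod_mul (hf 0).aemeasurable hg]
            congr 1
            exact ih (fun j => μ (Fin.succAbove 0 j)) (fun i => hf i.succ)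
        _ = ∏ i, ∫⁻ t, f i t ∂μ i := by
            rw [Fin.prod_univ_succ]
            rfl

lemma pi_gaussian_eq {d : ℕ} (a : Fin d → ℝ) {v : ℝ≥0} (hv : v ≠ 0) :
    Measure.pi (fun i => gaussianReal (a i) v) =
      (volume : Measure (Fin d → ℝ)).withDensity
        (fun x => ENNReal.ofReal (∏ i, gaussianPDFReal (a i) v (x i))) := by
  refine Measure.pi_eq fun s hs => ?_
  rw [withDensity_apply _ (MeasurableSet.univ_pi hs)]
  have hind : ∀ x : Fin d → ℝ,
      (Set.univ.pi s).indicator (fun x => ENNReal.ofReal (∏ i, gaussianPDFReal (a i) v (x i))) x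
        = ∏ i, (s i).indicator (gaussianPDF (a i) v) (x i) := by
    intro x
    by_cases hx : x ∈ Set.univ.pi s
    · rw [Set.indicator_of_mem hx,
        ENNReal.ofReal_prod_of_nonneg (fun i _ => gaussianPDFReal_nonneg _ _ _)]
      exact Finset.prod_congr rfl fun i _ =>
        (Set.indicator_of_mem (hx i (Set.mem_univ i)) (gaussianPDF (a i) v)).symm
    · rw [Set.indicator_of_notMem hx]
      simp only [Set.mem_pi, Set.mem_univ, forall_true_left, not_forall] at hx
      obtain ⟨i, hi⟩ := hx
      exact (Finset.prod_eq_zero (Finset.mem_univ i)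
        (Set.indicator_of_notMem hi (gaussianPDF (a i) v))).symm
  rw [← lintegral_indicator (MeasurableSet.univ_pi hs), lintegral_congr hind, volume_pi,
    lintegral_pi_prod _ (fun i => (measurable_gaussianPDF _ _).indicator (hs i))]
  exact Finset.prod_congr rfl fun i _ => by
    rw [lintegral_indicator (hs i), ← gaussianReal_apply _ hv]

lemma map_add_pi {d : ℕ} (a : Fin d → ℝ) (v : ℝ≥0) :
    Measure.map (fun x => a + x) (Measure.pi fun _ : Fin d => gaussianReal 0 v) =
      Measure.pi (fun i => gaussianReal (a i) v) := by
  have hmeas : Measurable (fun x : Fin d → ℝ => a + x) :=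
    measurable_pi_lambda _ fun i => (show Measurable fun x : Fin d → ℝ => a i + x i by fun_prop)
  refine (Measure.pi_eq fun s hs => ?_).symm
  rw [Measure.map_apply hmeas (MeasurableSet.univ_pi hs)]
  have : (fun x : Fin d → ℝ => a + x) ⁻¹' Set.univ.pi s
      = Set.univ.pi (fun i => (fun t => a i + t) ⁻¹' s i) := by
    ext x
    simp [Set.mem_pi]
  rw [this, Measure.pi_pi]
  refine Finset.prod_congr rfl fun i _ => ?_
  rw [← Measure.map_apply (measurable_const_add (a i)) (hs i),
    gaussianReal_map_const_add, zero_add]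

lemma key1d {v : ℝ≥0} (hv : v ≠ 0) (α a b t : ℝ) :
    gaussianPDFReal b v t * (gaussianPDFReal a v t / gaussianPDFReal b v t) ^ α
      = Real.exp (α * (α - 1) * (a - b) ^ 2 / (2 * v)) *
        gaussianPDFReal (α * a + (1 - α) * b) v t := by
  have hv' : (v : ℝ) ≠ 0 := by exact_mod_cast hv
  have hvpos : (0:ℝ) < v := lt_of_le_of_ne v.coe_nonneg (Ne.symm hv')
  have hc : (0:ℝ) < (Real.sqrt (2 * Real.pi * v))⁻¹ := by
    have := Real.pi_pos
    positivity
  simp only [gaussianPDFReal]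
  rw [mul_div_mul_left _ _ hc.ne', ← Real.exp_sub, ← Real.exp_mul, mul_assoc, ← Real.exp_add,
    mul_comm (Real.exp (α * (α - 1) * (a - b) ^ 2 / (2 * (v:ℝ))))]
  have hmm : ∀ c x y : ℝ, c * rexp x * rexp y = c * rexp (x + y) := fun c x y => by
    rw [mul_assoc, ← Real.exp_add]
  rw [hmm]
  congr 1
  rw [Real.exp_eq_exp]
  field_simp
  ring

/-- The Gaussian mechanism in `ℝ^d`: output `q(D) + N(0, σ²I)`. -/
noncomputable def gaussianMech {Data : Type*} {d : ℕ} (q : Data → (Fin d → ℝ))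
    (σ : ℝ) (hσ : 0 < σ) (D : Data) : Measure (Fin d → ℝ) :=
  Measure.map (fun x => q D + x)
    (Measure.pi fun _ : Fin d => gaussianReal 0 ⟨σ ^ 2, sq_nonneg σ⟩)

/-- The Gaussian mechanism with noise scale `σ` applied to a function `q` of
L2-sensitivity at most `C` satisfies `(α, αC²/(2σ²))`-RDP for every `α > 1`. -/
theorem gaussianMech_rdp {Data : Type*} {d : ℕ}
    (Adj : Data → Data → Prop) (q : Data → (Fin d → ℝ))
    (σ C : ℝ) (hσ : 0 < σ) (hC : 0 ≤ C)
    (hsens : ∀ D D', Adj D D' → Real.sqrt (∑ i, (q D i - q D' i) ^ 2) ≤ C)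
    (α : ℝ) (hα : 1 < α) :
    ∀ D D', Adj D D' →
      renyiDiv α (gaussianMech q σ hσ D) (gaussianMech q σ hσ D') ≤
        α * C ^ 2 / (2 * σ ^ 2) := by
  intro D D' hadj
  set v : ℝ≥0 := ⟨σ ^ 2, sq_nonneg σ⟩ with hvdef
  have hv : v ≠ 0 := by
    intro h
    exact (pow_ne_zero 2 hσ.ne') (congrArg NNReal.toReal h)
  set a : Fin d → ℝ := q D with hadef
  set b : Fin d → ℝ := q D' with hbdef
  -- real densities
  set uA : (Fin d → ℝ) → ℝ := fun x => ∏ i, gaussianPDFReal (a i) v (x i) with huA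
  set uB : (Fin d → ℝ) → ℝ := fun x => ∏ i, gaussianPDFReal (b i) v (x i) with huB
  have huApos : ∀ x, 0 < uA x := fun x =>
    Finset.prod_pos fun i _ => gaussianPDFReal_pos _ _ _ hv
  have huBpos : ∀ x, 0 < uB x := fun x =>
    Finset.prod_pos fun i _ => gaussianPDFReal_pos _ _ _ hv
  have huAmeas : Measurable uA :=
    Finset.measurable_prod _ fun i _ =>
      (measurable_gaussianPDFReal _ _).comp (measurable_pi_apply i)
  have huBmeas : Measurable uB :=
    Finset.measurable_prod _ fun i _ =>
      (measurable_gaussianPDFReal _ _).comp (measurable_pi_apply i)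
  have hPA : gaussianMech q σ hσ D = volume.withDensity (fun x => ENNReal.ofReal (uA x)) := by
    rw [gaussianMech, ← hvdef, map_add_pi a v, pi_gaussian_eq a hv]
  have hPB : gaussianMech q σ hσ D' = volume.withDensity (fun x => ENNReal.ofReal (uB x)) := by
    rw [gaussianMech, ← hvdef, map_add_pi b v, pi_gaussian_eq b hv]
  set g : (Fin d → ℝ) → ℝ≥0∞ := fun x => ENNReal.ofReal (uA x / uB x) with hgdef
  have hgmeas : Measurable g := (huAmeas.div huBmeas).ennreal_ofReal
  have hmeq : volume.withDensity (fun x => ENNReal.ofReal (uA x))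
      = (volume.withDensity (fun x => ENNReal.ofReal (uB x))).withDensity g := by
    rw [← withDensity_mul _ huBmeas.ennreal_ofReal hgmeas]
    congr 1
    funext x
    show ENNReal.ofReal (uA x) = ENNReal.ofReal (uB x) * ENNReal.ofReal (uA x / uB x)
    rw [← ENNReal.ofReal_mul (huBpos x).le, mul_comm, div_mul_cancel₀ _ (huBpos x).ne']
  haveI hprob : IsProbabilityMeasure (volume.withDensity (fun x => ENNReal.ofReal (uB x))) := by
    have h1 : IsProbabilityMeasure (Measure.pi fun i => gaussianReal (b i) v) := inferInstance
    rwa [pi_gaussian_eq b hv] at h1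
  have hrn : (volume.withDensity (fun x => ENNReal.ofReal (uA x))).rnDeriv
        (volume.withDensity (fun x => ENNReal.ofReal (uB x)))
      =ᵐ[volume.withDensity (fun x => ENNReal.ofReal (uB x))] g := by
    rw [hmeq]
    exact Measure.rnDeriv_withDensity _ hgmeas
  set K : Fin d → ℝ := fun i => Real.exp (α * (α - 1) * (a i - b i) ^ 2 / (2 * v)) with hK
  set m : Fin d → ℝ := fun i => α * a i + (1 - α) * b i with hm
  have hint : (∫ x, (((gaussianMech q σ hσ D).rnDeriv (gaussianMech q σ hσ D')) x).toReal ^ α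
        ∂(gaussianMech q σ hσ D')) = ∏ i, K i := by
    rw [hPA, hPB, integral_congr_ae (hrn.mono fun x hx => by rw [hx])]
    have hme : (volume.withDensity fun x => ENNReal.ofReal (uB x))
        = volume.withDensity (fun x => (((fun y => (uB y).toNNReal) x : ℝ≥0) : ℝ≥0∞)) := rfl
    rw [hme, integral_withDensity_eq_integral_smul huBmeas.real_toNNReal
      (fun x => (g x).toReal ^ α)]
    have e2 : (fun x => (uB x).toNNReal • ((g x).toReal ^ α))
        = fun x : Fin d → ℝ => ∏ i, (K i * gaussianPDFReal (m i) v (x i)) := by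
      funext x
      have h1 : (g x).toReal = uA x / uB x :=
        ENNReal.toReal_ofReal (div_nonneg (huApos x).le (huBpos x).le)
      rw [h1, NNReal.smul_def, Real.coe_toNNReal _ (huBpos x).le, smul_eq_mul]
      simp only [huA, huB, hK, hm]
      rw [← Finset.prod_div_distrib,
        ← Real.finset_prod_rpow _ _ (fun i _ => div_nonneg (gaussianPDFReal_nonneg _ _ _)
          (gaussianPDFReal_nonneg _ _ _)) α, ← Finset.prod_mul_distrib]
      exact Finset.prod_congr rfl fun i _ => key1d hv α (a i) (b i) (x i)
    rw [e2, volume_pi, integral_fin_nat_prod_eq_prod (f := fun i t => K i * gaussianPDFReal (m i) v t)]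
    exact Finset.prod_congr rfl fun i _ => by
      rw [integral_const_mul, integral_gaussianPDFReal_eq_one _ hv, mul_one]
  unfold renyiDiv
  rw [hint]
  simp only [hK]
  rw [← Real.exp_sum, Real.log_exp]
  have hveq : (v : ℝ) = σ ^ 2 := rfl
  have hsum : ∑ i, α * (α - 1) * (a i - b i) ^ 2 / (2 * (v:ℝ))
      = α * (α - 1) * (∑ i, (a i - b i) ^ 2) / (2 * σ ^ 2) := by
    rw [hveq, ← Finset.sum_div, ← Finset.mul_sum]
  rw [hsum]
  have hα1 : α - 1 ≠ 0 := sub_ne_zero.mpr hα.ne'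
  have heq : (α - 1)⁻¹ * (α * (α - 1) * (∑ i, (a i - b i) ^ 2) / (2 * σ ^ 2))
      = α * (∑ i, (a i - b i) ^ 2) / (2 * σ ^ 2) := by
    field_simp
  rw [heq]
  have hT : ∑ i, (a i - b i) ^ 2 ≤ C ^ 2 := by
    have h1 := hsens D D' hadj
    have h2 : 0 ≤ ∑ i, (a i - b i) ^ 2 := Finset.sum_nonneg fun i _ => sq_nonneg _
    calc ∑ i, (a i - b i) ^ 2 = Real.sqrt (∑ i, (a i - b i) ^ 2) ^ 2 := (Real.sq_sqrt h2).symm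
      _ ≤ C ^ 2 := by
          have := Real.sqrt_nonneg (∑ i, (a i - b i) ^ 2)
          exact pow_le_pow_left₀ this h1 2
  have hα0 : (0:ℝ) ≤ α := by linarith
  gcongr
end
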